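/- Let n ≥ 1 and k ≥ 1 be integers and fix i with 1 ≤ i ≤ n. Then, as an identity in ℚ(q)[x₁,…,xₙ], R_i(RS_{k−1,n}) = RS_{k,n}, where R_i = Σ_{l=0}^{n} e_{l+1} · (q−1)^l · (d/dx_i)_q^l and e_j denotes the j-th elementary symmetric polynomial in the n+1 quantities 1, x₁, …, xₙ. -/

import Mathlib

noncomputable section
open MvPolynomial

/-- `(q;q)_d = ∏_{k=1}^d (1 - q^k)` in `ℚ(q)`. -/
def qqPoch (q : RatFunc ℚ) (d : ℕ) : RatFunc ℚ :=
  ∏ k ∈ Finset.range d, (1 - q ^ (k + 1))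

/-- The `q`-multinomial coefficient `[Σk; k₀,…]_q` in `ℚ(q)`. -/
def qMultinomial {m : ℕ} (q : RatFunc ℚ) (k : Fin m → ℕ) : RatFunc ℚ :=
  qqPoch q (∑ i, k i) / ∏ i, qqPoch q (k i)

/-- The multivariate Rogers–Szegő polynomial
`RS_{k,n}(x;q) = Σ_{i₀+⋯+iₙ=k} [k; i₀,…,iₙ]_q x₁^{i₁}⋯xₙ^{iₙ}` in `ℚ(q)[x₁,…,xₙ]`. -/
def RSkn (n k : ℕ) : MvPolynomial (Fin n) (RatFunc ℚ) :=
  ∑ i ∈ Finset.Nat.antidiagonalTuple (n + 1) k,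
    monomial (Finsupp.equivFunOnFinite.symm fun j : Fin n => i j.succ)
      (qMultinomial RatFunc.X i)

/-- The substitution operator `T_{i,q} : f(x₁,…,x_i,…,xₙ) ↦ f(x₁,…,q·x_i,…,xₙ)`. -/
def Tq {n : ℕ} (i : Fin n) (f : MvPolynomial (Fin n) (RatFunc ℚ)) :
    MvPolynomial (Fin n) (RatFunc ℚ) :=
  aeval (fun j : Fin n => if j = i then C RatFunc.X * X j else X j) f

/-- The `i`-th Jackson (partial `q`-)derivative `(d/dx_i)_q f = (f − T_{i,q} f)/((1−q)x_i)`;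
the numerator `f − T_{i,q} f` is exactly divisible by the monomial `x_i`. -/
def jackson {n : ℕ} (i : Fin n) (f : MvPolynomial (Fin n) (RatFunc ℚ)) :
    MvPolynomial (Fin n) (RatFunc ℚ) :=
  C (1 - RatFunc.X : RatFunc ℚ)⁻¹ * ((f - Tq i f).divMonomial (Finsupp.single i 1))

/-- The `j`-th elementary symmetric polynomial `e_j(1, x₁, …, xₙ)` in the `n+1`
quantities `1, x₁, …, xₙ`. -/
def esymAug (n : ℕ) (j : ℕ) : MvPolynomial (Fin n) (RatFunc ℚ) :=
  ∑ t ∈ Finset.univ.powersetCard j,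
    ∏ m ∈ t, (Fin.cons 1 (fun j : Fin n => X j) : Fin (n + 1) → MvPolynomial (Fin n) (RatFunc ℚ)) m

/-- The raising operator `R_i = Σ_{l=0}^{n} e_{l+1}(1,x₁,…,xₙ) (q−1)^l (d/dx_i)_q^l`. -/
def Rop {n : ℕ} (i : Fin n) (f : MvPolynomial (Fin n) (RatFunc ℚ)) :
    MvPolynomial (Fin n) (RatFunc ℚ) :=
  ∑ l ∈ Finset.range (n + 1),
    esymAug n (l + 1) * (C ((RatFunc.X - 1 : RatFunc ℚ) ^ l) * (jackson i)^[l] f)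

end

/-!
Since `(d/dx_i)_q RS_m = [m]_q RS_{m-1}`, the operator `(q-1)^l (d/dx_i)_q^l` sends `RS_{k-1}` to
`(q^{k-1}-1)⋯(q^{k-l}-1) RS_{k-1-l}`, and the claim becomes a recurrence for `RS_k` not involving
`i`. Put `x₀ = 1`. The series `G(t) = ∑ₖ RS_k tᵏ / (q;q)ₖ` factors as `∏ⱼ e_q(xⱼ t)` with
`e_q(u) = ∑ₘ uᵐ / (q;q)ₘ`, and `e_q(qu) = (1 - u) e_q(u)` gives `G(qt) = ∏ⱼ (1 - xⱼ t) G(t)`.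
Comparing coefficients of `tᵏ`, the elementary symmetric polynomials of `1, x₁, …, xₙ` appear and
the recurrence follows.
-/

open MvPolynomial Finset

local notation "q" => (RatFunc.X : RatFunc ℚ)

lemma Finset.sum_range_eq_of_forall_le_eq_zero {M : Type*} [AddCommMonoid M] {f : ℕ → M}
    {a c : ℕ} (hf : ∀ l, c ≤ l → f l = 0) (ha : c ≤ a) :
    ∑ l ∈ range a, f l = ∑ l ∈ range c, f l :=
  (sum_subset (range_subset_range.2 ha) fun l _ hl => hf l (by simpa using hl)).symm

lemma PowerSeries.coeff_prod_one_sub_C_mul_X {R ι : Type*} [CommRing R] (s : Finset ι)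
    (a : ι → R) (l : ℕ) :
    coeff l (∏ j ∈ s, (1 - C (a j) * X)) = (-1) ^ l * ∑ T ∈ s.powersetCard l, ∏ j ∈ T, a j := by
  have h : ∀ j, (1 : PowerSeries R) - C (a j) * X = 1 + C (-a j) * X := fun j => by
    rw [map_neg, neg_mul, sub_eq_add_neg]
  simp_rw [h, prod_one_add, prod_mul_distrib, prod_const, ← map_prod, map_sum, coeff_C_mul_X_pow,
    powersetCard_eq_filter, sum_filter, mul_sum, prod_neg]
  refine sum_congr rfl fun T _ => ?_
  obtain rfl | hT := eq_or_ne l #T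
  · simp
  · simp [hT, hT.symm]

lemma RatFunc.one_sub_X_pow_ne_zero {m : ℕ} (hm : m ≠ 0) : (1 : RatFunc ℚ) - q ^ m ≠ 0 := by
  intro h
  have hX : (Polynomial.X : Polynomial ℚ) ^ m = 1 :=
    RatFunc.algebraMap_injective ℚ <| by simpa [RatFunc.algebraMap_X] using (sub_eq_zero.1 h).symm
  simpa [hm] using congrArg Polynomial.natDegree hX

lemma RatFunc.one_sub_X_ne_zero : (1 : RatFunc ℚ) - q ≠ 0 := by
  simpa using one_sub_X_pow_ne_zero one_ne_zero

lemma qqPoch_succ (x : RatFunc ℚ) (d : ℕ) : qqPoch x (d + 1) = qqPoch x d * (1 - x ^ (d + 1)) :=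
  prod_range_succ _ d

lemma qqPoch_ne_zero (d : ℕ) : qqPoch q d ≠ 0 :=
  prod_ne_zero_iff.2 fun _ _ => RatFunc.one_sub_X_pow_ne_zero (Nat.succ_ne_zero _)

noncomputable def qFalling (m l : ℕ) : RatFunc ℚ := ∏ j ∈ range l, (q ^ (m - j) - 1)

lemma qFalling_zero (m : ℕ) : qFalling m 0 = 1 :=
  prod_range_zero _

lemma qFalling_succ (m l : ℕ) : qFalling m (l + 1) = qFalling m l * (q ^ (m - l) - 1) :=
  prod_range_succ _ l

lemma qFalling_succ_succ (m l : ℕ) :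
    qFalling (m + 1) (l + 1) = (q ^ (m + 1) - 1) * qFalling m l := by
  rw [qFalling, prod_range_succ', mul_comm]
  simp [qFalling]

lemma qFalling_eq_zero {m l : ℕ} (h : m < l) : qFalling m l = 0 :=
  prod_eq_zero (mem_range.2 h) (by simp)

lemma qFalling_mul_qqPoch {m l : ℕ} (h : l ≤ m) :
    qFalling m l * qqPoch q (m - l) = (-1) ^ l * qqPoch q m := by
  induction l generalizing m with
  | zero => simp [qFalling_zero]
  | succ l ih =>
    obtain ⟨m, rfl⟩ : ∃ m', m = m' + 1 := ⟨m - 1, by omega⟩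
    rw [qFalling_succ_succ, Nat.add_sub_add_right, mul_assoc, ih (by omega), qqPoch_succ]
    ring

section Jackson

variable {n : ℕ}

lemma Tq_monomial (i : Fin n) (u : Fin n →₀ ℕ) (c : RatFunc ℚ) :
    Tq i (monomial u c) = monomial u (q ^ u i * c) := by
  have hvar : ∀ j, (if j = i then C q * X j else X j : MvPolynomial (Fin n) (RatFunc ℚ)) =
      C (if j = i then q else 1) * X j := fun j => by split_ifs <;> simp
  rw [Tq, aeval_monomial, monomial_eq, Finsupp.prod_fintype _ _ (fun _ => pow_zero _),
    Finsupp.prod_fintype _ _ (fun _ => pow_zero _)]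
  simp only [hvar, mul_pow, prod_mul_distrib, ← map_pow, ← map_prod, ite_pow, one_pow,
    prod_ite_eq', mem_univ, if_true, algebraMap_eq, C_mul]
  ring

lemma coeff_Tq (i : Fin n) (f : MvPolynomial (Fin n) (RatFunc ℚ)) (u : Fin n →₀ ℕ) :
    coeff u (Tq i f) = q ^ u i * coeff u f := by
  induction f using MvPolynomial.induction_on' with
  | monomial v c =>
    rw [Tq_monomial, coeff_monomial, coeff_monomial]
    split_ifs with h <;> simp [h]
  | add f g hf hg =>
    rw [show Tq i (f + g) = Tq i f + Tq i g from map_add _ f g, coeff_add, coeff_add, hf, hg,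
      mul_add]

lemma coeff_jackson (i : Fin n) (f : MvPolynomial (Fin n) (RatFunc ℚ)) (u : Fin n →₀ ℕ) :
    coeff u (jackson i f) =
      (1 - q ^ (u i + 1)) / (1 - q) * coeff (u + Finsupp.single i 1) f := by
  rw [jackson, coeff_C_mul, coeff_divMonomial, coeff_sub, coeff_Tq, add_comm (Finsupp.single i 1)]
  simp only [Finsupp.add_apply, Finsupp.single_eq_same]
  ring

lemma jackson_C_mul (i : Fin n) (c : RatFunc ℚ) (f : MvPolynomial (Fin n) (RatFunc ℚ)) :
    jackson i (C c * f) = C c * jackson i f := by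
  ext u
  simp only [coeff_jackson, coeff_C_mul]
  ring

end Jackson

section RogersSzego

variable {n : ℕ}

lemma qMultinomial_cons (a : ℕ) (e : Fin n → ℕ) :
    qMultinomial q (Fin.cons a e) =
      qqPoch q (a + ∑ j, e j) / (qqPoch q a * ∏ j, qqPoch q (e j)) := by
  simp [qMultinomial, Fin.sum_cons, Fin.prod_univ_succ]

lemma coeff_RSkn (k : ℕ) (d : Fin n →₀ ℕ) :
    coeff d (RSkn n k) =
      if ∑ j, d j ≤ k then qMultinomial q (Fin.cons (k - ∑ j, d j) d) else 0 := by
  have htail : ∀ t ∈ Nat.antidiagonalTuple (n + 1) k,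
      Finsupp.equivFunOnFinite.symm (fun j : Fin n => t j.succ) = d ↔
        ∑ j, d j ≤ k ∧ t = Fin.cons (k - ∑ j, d j) d := by
    intro t ht
    obtain ⟨a, e, rfl⟩ : ∃ a e, t = Fin.cons a e := ⟨t 0, Fin.tail t, (Fin.cons_self_tail t).symm⟩
    rw [Nat.mem_antidiagonalTuple, Fin.sum_cons] at ht
    rw [Equiv.symm_apply_eq, Fin.cons_inj]
    simp only [Fin.cons_succ]
    constructor
    · intro he
      obtain rfl : e = d := he
      exact ⟨by omega, by omega, rfl⟩
    · exact fun h => h.2.2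
  simp only [RSkn, coeff_sum, coeff_monomial]
  rw [sum_congr rfl fun t ht => if_congr (htail t ht) rfl rfl]
  simp only [ite_and]
  split_ifs with h
  · rw [sum_ite_eq', if_pos]
    rw [Nat.mem_antidiagonalTuple, Fin.sum_cons]
    omega
  · simp

lemma sum_add_single_one (u : Fin n →₀ ℕ) (i : Fin n) :
    ∑ j, (u + Finsupp.single i 1 : Fin n →₀ ℕ) j = ∑ j, u j + 1 := by
  simp [sum_add_distrib]

lemma prod_qqPoch_add_single_one (x : RatFunc ℚ) (u : Fin n →₀ ℕ) (i : Fin n) :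
    ∏ j, qqPoch x ((u + Finsupp.single i 1 : Fin n →₀ ℕ) j) =
      (1 - x ^ (u i + 1)) * ∏ j, qqPoch x (u j) := by
  rw [← mul_prod_erase univ _ (mem_univ i),
    ← mul_prod_erase univ (fun j => qqPoch x (u j)) (mem_univ i),
    prod_congr rfl fun j hj => by
      rw [Finsupp.add_apply, Finsupp.single_eq_of_ne (ne_of_mem_erase hj), add_zero]]
  simp only [Finsupp.add_apply, Finsupp.single_eq_same, qqPoch_succ]
  ring

lemma jackson_RSkn (i : Fin n) (m : ℕ) :
    jackson i (RSkn n m) = C ((1 - q ^ m) / (1 - q)) * RSkn n (m - 1) := by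
  ext u
  rw [coeff_jackson, coeff_C_mul, coeff_RSkn, coeff_RSkn, sum_add_single_one]
  cases m with
  | zero => simp
  | succ m =>
    rw [Nat.add_sub_cancel]
    split_ifs with hlt hle hle
    · rw [qMultinomial_cons, qMultinomial_cons, prod_qqPoch_add_single_one, sum_add_single_one,
        show m + 1 - (∑ j, u j + 1) = m - ∑ j, u j by omega, Nat.sub_add_cancel hle,
        show m - ∑ j, u j + (∑ j, u j + 1) = m + 1 by omega, qqPoch_succ]
      have := RatFunc.one_sub_X_pow_ne_zero (m := u i + 1) (by omega)
      have := RatFunc.one_sub_X_ne_zero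
      have := qqPoch_ne_zero (m - ∑ j, u j)
      have : ∏ j, qqPoch q (u j) ≠ 0 := prod_ne_zero_iff.2 fun j _ => qqPoch_ne_zero _
      field_simp
    · omega
    · omega
    · simp

lemma iterate_jackson_RSkn (i : Fin n) (m l : ℕ) :
    C ((q - 1) ^ l) * (jackson i)^[l] (RSkn n m) = C (qFalling m l) * RSkn n (m - l) := by
  induction l with
  | zero => simp [qFalling_zero]
  | succ l ih =>
    have := RatFunc.one_sub_X_ne_zero
    calc C ((q - 1) ^ (l + 1)) * (jackson i)^[l + 1] (RSkn n m)
        = C (q - 1) * jackson i (C ((q - 1) ^ l) * (jackson i)^[l] (RSkn n m)) := by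
          rw [Function.iterate_succ_apply', jackson_C_mul, pow_succ, C_mul]
          ring
      _ = C (qFalling m (l + 1)) * RSkn n (m - (l + 1)) := by
          rw [ih, jackson_C_mul, jackson_RSkn, qFalling_succ, Nat.sub_sub]
          simp only [← mul_assoc, ← C_mul]
          congr 2
          field_simp
          ring

lemma Rop_RSkn (i : Fin n) (m : ℕ) :
    Rop i (RSkn n m) =
      ∑ l ∈ range (n + 1), esymAug n (l + 1) * (C (qFalling m l) * RSkn n (m - l)) :=
  sum_congr rfl fun l _ => by rw [iterate_jackson_RSkn]

end RogersSzego

lemma esymAug_zero {n : ℕ} : esymAug n 0 = 1 := by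
  simp [esymAug]

lemma esymAug_eq_zero {n j : ℕ} (h : n + 1 < j) : esymAug n j = 0 := by
  rw [esymAug, powersetCard_eq_empty.2 (by simpa using h), sum_empty]

noncomputable def qExp (A : Type*) [CommRing A] [Algebra (RatFunc ℚ) A] : PowerSeries A :=
  PowerSeries.mk fun m => algebraMap (RatFunc ℚ) A (qqPoch q m)⁻¹

lemma rescale_qExp (A : Type*) [CommRing A] [Algebra (RatFunc ℚ) A] :
    PowerSeries.rescale (algebraMap (RatFunc ℚ) A q) (qExp A) = (1 - PowerSeries.X) * qExp A := by
  ext m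
  rw [sub_mul, one_mul, map_sub, PowerSeries.coeff_rescale]
  cases m with
  | zero => simp [qExp, qqPoch]
  | succ m =>
    rw [PowerSeries.coeff_succ_X_mul]
    simp only [qExp, PowerSeries.coeff_mk, ← map_pow, ← map_mul, ← map_sub]
    congr 1
    have := qqPoch_ne_zero m
    have := RatFunc.one_sub_X_pow_ne_zero m.succ_ne_zero
    rw [qqPoch_succ]
    field_simp
    ring

section GeneratingFunction

variable (n : ℕ)

noncomputable def augVars : Fin (n + 1) → MvPolynomial (Fin n) (RatFunc ℚ) :=
  Fin.cons 1 fun j => X j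

noncomputable def rsGen : PowerSeries (MvPolynomial (Fin n) (RatFunc ℚ)) :=
  ∏ j, PowerSeries.rescale (augVars n j) (qExp _)

lemma coeff_rsGen (k : ℕ) : PowerSeries.coeff k (rsGen n) = C (qqPoch q k)⁻¹ * RSkn n k := by
  rw [rsGen, PowerSeries.coeff_prod, RSkn, mul_sum]
  refine sum_equiv Finsupp.equivFunOnFinite (fun f => by simp [Nat.mem_antidiagonalTuple])
    fun f hf => ?_
  rw [mem_finsuppAntidiag] at hf
  simp only [PowerSeries.coeff_rescale, qExp, PowerSeries.coeff_mk, prod_mul_distrib, monomial_eq,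
    Finsupp.prod_fintype _ _ (fun _ => pow_zero _), algebraMap_eq, ← map_prod]
  rw [Fin.prod_univ_succ]
  simp only [augVars, Fin.cons_zero, Fin.cons_succ, one_pow, one_mul,
    Finsupp.equivFunOnFinite_apply, Finsupp.coe_equivFunOnFinite_symm, qMultinomial, hf.1,
    ← mul_assoc, ← C_mul, prod_inv_distrib]
  rw [mul_comm]
  congr 2
  have := qqPoch_ne_zero k
  field_simp

lemma rescale_rsGen :
    PowerSeries.rescale (C q) (rsGen n) =
      (∏ j, (1 - PowerSeries.C (augVars n j) * PowerSeries.X)) * rsGen n := by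
  rw [rsGen, map_prod, ← prod_mul_distrib]
  refine prod_congr rfl fun j _ => ?_
  rw [PowerSeries.rescale_rescale, mul_comm, ← PowerSeries.rescale_rescale, ← algebraMap_eq,
    rescale_qExp, map_mul, map_sub, map_one, PowerSeries.rescale_X]

lemma coeff_prod_one_sub_augVars_mul_X (l : ℕ) :
    PowerSeries.coeff l (∏ j, (1 - PowerSeries.C (augVars n j) * PowerSeries.X)) =
      (-1) ^ l * esymAug n l :=
  PowerSeries.coeff_prod_one_sub_C_mul_X _ _ _

lemma RSkn_qdifference (k : ℕ) :
    C (q ^ k) * RSkn n k =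
      ∑ l ∈ range (k + 1), esymAug n l * (C (qFalling k l) * RSkn n (k - l)) := by
  have h := congrArg (PowerSeries.coeff k) (rescale_rsGen n)
  rw [PowerSeries.coeff_rescale, PowerSeries.coeff_mul,
    Nat.sum_antidiagonal_eq_sum_range_succ_mk] at h
  simp only [coeff_prod_one_sub_augVars_mul_X, coeff_rsGen] at h
  calc C (q ^ k) * RSkn n k = C (qqPoch q k) * (C q ^ k * (C (qqPoch q k)⁻¹ * RSkn n k)) := by
        have := qqPoch_ne_zero k
        simp only [← mul_assoc, ← C_mul, ← map_pow]
        congr 2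
        field_simp
    _ = _ := by
        rw [h, mul_sum]
        refine sum_congr rfl fun l hl => ?_
        rw [eq_div_of_mul_eq (qqPoch_ne_zero _) (qFalling_mul_qqPoch (mem_range_succ_iff.1 hl))]
        simp only [map_mul, map_pow, map_neg, map_one, div_eq_mul_inv]
        ring

lemma RSkn_succ (m : ℕ) :
    RSkn n (m + 1) =
      ∑ l ∈ range (m + 1), esymAug n (l + 1) * (C (qFalling m l) * RSkn n (m - l)) := by
  have h := RSkn_qdifference n (m + 1)
  simp only [sum_range_succ' _ (m + 1), qFalling_succ_succ, qFalling_zero, esymAug_zero,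
    Nat.add_sub_add_right, Nat.sub_zero, C_mul, map_one, one_mul] at h
  have hc : (q ^ (m + 1) - 1 : RatFunc ℚ) ≠ 0 :=
    fun h0 => RatFunc.one_sub_X_pow_ne_zero (Nat.add_one_ne_zero m) (by linear_combination -h0)
  refine mul_left_cancel₀ (mt C_eq_zero.1 hc) ?_
  rw [mul_sum]
  simp only [map_sub, map_pow, map_one] at h ⊢
  rw [sub_mul, h, one_mul, add_sub_cancel_right]
  exact sum_congr rfl fun _ _ => by ring

end GeneratingFunction

theorem stmt11_general (n k : ℕ) (hk : 1 ≤ k) (i : Fin n) :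
    Rop i (RSkn n (k - 1)) = RSkn n k := by
  obtain ⟨m, rfl⟩ : ∃ m, k = m + 1 := ⟨k - 1, by omega⟩
  have hvanish : ∀ l, min (n + 1) (m + 1) ≤ l →
      esymAug n (l + 1) * (C (qFalling m l) * RSkn n (m - l)) = 0 := by
    intro l hl
    rcases min_le_iff.1 hl with hn | hm
    · rw [esymAug_eq_zero (by omega), zero_mul]
    · rw [qFalling_eq_zero (by omega), map_zero, zero_mul, mul_zero]
  rw [Nat.add_sub_cancel, Rop_RSkn, RSkn_succ,
    sum_range_eq_of_forall_le_eq_zero hvanish (min_le_left _ _),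
    sum_range_eq_of_forall_le_eq_zero hvanish (min_le_right _ _)]

/-- For `n ≥ 1`, `k ≥ 1` and `1 ≤ i ≤ n`, one has
`R_i(RS_{k−1,n}) = RS_{k,n}` in `ℚ(q)[x₁,…,xₙ]`. -/
theorem stmt11 (n k : ℕ) (hn : 1 ≤ n) (hk : 1 ≤ k) (i : Fin n) :
    Rop i (RSkn n (k - 1)) = RSkn n k :=
  stmt11_general n k hk i
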